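/- Fix κ ≥ 0 and let A ∈ C²(ℝ, M²) be the solution of the initial value problem Ä + κA = Λ(A,Ȧ)·cof A, A(0) = A₀, Ȧ(0) = B₀, with data (A₀,B₀) ∈ D satisfying 2X₁(A₀,B₀) + X₂(A₀,B₀)² − X₃(A₀,B₀)² = 0. If κ = 0, then A(t) = B₀t + A₀ for all t; if κ > 0, then A(t) = cos(√κ t)·A₀ + (1/√κ)sin(√κ t)·B₀ for all t. -/

import Mathlib

open Matrix

noncomputable section

/-- `M²`: the space of 2×2 real matrices. -/
abbrev M2 : Type := Matrix (Fin 2) (Fin 2) ℝ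

/-- Frobenius inner product `⟨A,B⟩ = tr(AᵀB)`. -/
def mip (A B : M2) : ℝ := (Aᵀ * B).trace

/-- Frobenius norm `|A| = ⟨A,A⟩^{1/2}`. -/
def fnorm (A : M2) : ℝ := Real.sqrt (mip A A)

/-- The matrix Z = [[0,−1],[1,0]]. -/
def Zm : M2 := !![0, -1; 1, 0]

/-- The matrix K = [[1,0],[0,−1]]. -/
def Km : M2 := !![1, 0; 0, -1]

/-- The matrix M = [[0,1],[1,0]]. -/
def Mm : M2 := !![0, 1; 1, 0]

/-- Cofactor: cof [[a,b],[c,d]] = [[d,−c],[−b,a]]. -/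
def cofm (A : M2) : M2 := !![A 1 1, -(A 1 0); -(A 0 1), A 0 0]

/-- Membership in SO(2,ℝ). -/
def isSO (U : M2) : Prop := U.det = 1 ∧ U⁻¹ = Uᵀ

/-- The rotation U(θ) = cos θ·I + sin θ·Z. -/
def Um (θ : ℝ) : M2 := Real.cos θ • (1 : M2) + Real.sin θ • Zm

/-- Invariant X₁(A,B) = ½|B|² + (κ/2)|A|². -/
def X1 (κ : ℝ) (A B : M2) : ℝ := (1/2) * mip B B + (κ/2) * mip A A

/-- Invariant X₂(A,B) = ½⟨ZA − AZ, B⟩. -/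
def X2 (A B : M2) : ℝ := (1/2) * mip (Zm * A - A * Zm) B

/-- Invariant X₃(A,B) = ½⟨ZA + AZ, B⟩. -/
def X3 (A B : M2) : ℝ := (1/2) * mip (Zm * A + A * Zm) B

/-- Lagrange multiplier Λ(A,B) = 2(κ − det B)/|A|². -/
def Lam (κ : ℝ) (A B : M2) : ℝ := 2 * (κ - B.det) / (mip A A)

/-!
Along a solution put `u = det A - 1` and `v = ⟨Ȧ, cof A⟩`. Then `u' = v` and, wherever `A ≠ 0`,
`v' = -2κu`, so the energy `2κu² + v²` is conserved; it vanishes initially, hence `v ≡ 0`. Next,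
`w = (κ - det Ȧ)|A|²` satisfies `w' = κ v |A|² = 0`, and on `D` one has
`2X₁ + X₂² - X₃² = (κ - det B)|A|²`, so the hypothesis on the data says `w(0) = 0`. As
`Λ = 2w / |A|⁴`, the multiplier vanishes identically and `A` solves `Ä + κA = 0`; the solution
of that linear equation with the given data is unique, again by conservation of energy.
-/

lemma mip_eq (A B : M2) :
    mip A B = A 0 0 * B 0 0 + A 0 1 * B 0 1 + A 1 0 * B 1 0 + A 1 1 * B 1 1 := by
  simp only [mip, Matrix.trace, Matrix.diag, Matrix.mul_apply, Matrix.transpose_apply,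
    Fin.sum_univ_two]
  ring

lemma mip_comm (A B : M2) : mip A B = mip B A := by
  simp only [mip_eq]; ring

lemma mip_sub_left (A B C : M2) : mip (A - B) C = mip A C - mip B C := by
  simp only [mip_eq, Matrix.sub_apply]; ring

lemma mip_smul_left (c : ℝ) (A B : M2) : mip (c • A) B = c * mip A B := by
  simp only [mip_eq, Matrix.smul_apply, smul_eq_mul]; ring

lemma mip_cofm_cofm (A B : M2) : mip (cofm A) (cofm B) = mip A B := by
  simp only [mip_eq, cofm, of_apply, cons_val', cons_val_zero, cons_val_one, empty_val',
    cons_val_fin_one]; ring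

lemma mip_cofm_comm (A B : M2) : mip A (cofm B) = mip B (cofm A) := by
  simp only [mip_eq, cofm, of_apply, cons_val', cons_val_zero, cons_val_one, empty_val',
    cons_val_fin_one]; ring

lemma mip_cofm_self (A : M2) : mip A (cofm A) = 2 * A.det := by
  simp only [mip_eq, cofm, det_fin_two, of_apply, cons_val', cons_val_zero, cons_val_one,
    empty_val', cons_val_fin_one]; ring

lemma eq_zero_of_mip_self_eq_zero {A : M2} (h : mip A A = 0) : A = 0 := by
  rw [mip_eq] at h
  have := sq_nonneg (A 0 0); have := sq_nonneg (A 0 1)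
  have := sq_nonneg (A 1 0); have := sq_nonneg (A 1 1)
  ext i j
  fin_cases i <;> fin_cases j <;> simp only [Fin.zero_eta, Fin.mk_one, Matrix.zero_apply] <;>
    nlinarith

lemma Lam_mul_mip_self {κ : ℝ} {A : M2} (B : M2) (hA : mip A A ≠ 0) :
    Lam κ A B * mip A A = 2 * (κ - B.det) :=
  div_mul_cancel₀ _ hA

-- At `A = 0` this is the junk value `x / 0 = 0`.
lemma Lam_eq_zero {κ : ℝ} {A B : M2} (h : (κ - B.det) * mip A A = 0) : Lam κ A B = 0 := by
  rcases mul_eq_zero.mp h with h | h <;> simp [Lam, h]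

lemma invariant_eq_mul_mip_self (κ : ℝ) {A B : M2} (hdet : A.det = 1)
    (htan : mip B (cofm A) = 0) :
    2 * X1 κ A B + X2 A B ^ 2 - X3 A B ^ 2 = (κ - B.det) * mip A A := by
  rw [det_fin_two] at hdet
  rw [mip_eq] at htan
  simp only [X1, X2, X3, Zm, cofm, mip_eq, det_fin_two, Matrix.add_apply, Matrix.sub_apply,
    Matrix.mul_apply, Fin.sum_univ_two, of_apply, cons_val', cons_val_zero, cons_val_one,
    cons_val_fin_one] at htan ⊢
  linear_combination -(B 0 0 ^ 2 + B 0 1 ^ 2 + B 1 0 ^ 2 + B 1 1 ^ 2) * hdet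
    + (A 0 0 * B 0 0 + A 0 1 * B 0 1 + A 1 0 * B 1 0 + A 1 1 * B 1 1) * htan

section Calculus

variable {f g : ℝ → M2} {f' g' : M2} {t : ℝ}

lemma HasDerivAt.matrix_apply (hf : HasDerivAt f f' t) (i j : Fin 2) :
    HasDerivAt (fun s => f s i j) (f' i j) t :=
  hasDerivAt_pi.mp (hasDerivAt_pi.mp hf i) j

lemma HasDerivAt.det (hf : HasDerivAt f f' t) :
    HasDerivAt (fun s => (f s).det) (mip f' (cofm (f t))) t := by
  have e := hf.matrix_apply
  simp only [det_fin_two]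
  refine (((e 0 0).mul (e 1 1)).sub ((e 0 1).mul (e 1 0))).congr_deriv ?_
  simp only [mip_eq, cofm, of_apply, cons_val', cons_val_zero, cons_val_one,
    empty_val', cons_val_fin_one]
  ring

lemma HasDerivAt.cofm (hf : HasDerivAt f f' t) :
    HasDerivAt (fun s => cofm (f s)) (cofm f') t := by
  refine hasDerivAt_pi.mpr fun i => hasDerivAt_pi.mpr fun j => ?_
  fin_cases i <;> fin_cases j
  · exact hf.matrix_apply 1 1
  · exact (hf.matrix_apply 1 0).neg
  · exact (hf.matrix_apply 0 1).neg
  · exact hf.matrix_apply 0 0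

lemma HasDerivAt.mip (hf : HasDerivAt f f' t) (hg : HasDerivAt g g' t) :
    HasDerivAt (fun s => mip (f s) (g s)) (mip f' (g t) + mip (f t) g') t := by
  have e := fun i j => (hf.matrix_apply i j).mul (hg.matrix_apply i j)
  simp only [mip_eq]
  exact ((((e 0 0).add (e 0 1)).add (e 1 0)).add (e 1 1)).congr_deriv (by ring)

end Calculus

lemma eq_of_forall_hasDerivAt_zero {f : ℝ → ℝ} (hf : ∀ t, HasDerivAt f 0 t) (s t : ℝ) :
    f s = f t :=
  is_const_of_deriv_eq_zero (fun x => (hf x).differentiableAt) (fun x => (hf x).deriv) s t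

/-- The energy `e ^ 2 + κ * d ^ 2` is conserved. -/
lemma oscillator_eq_zero {κ : ℝ} (hκ : 0 ≤ κ) {d e e' : ℝ → ℝ}
    (hd : ∀ t, HasDerivAt d (e t) t) (he : ∀ t, HasDerivAt e (e' t) t)
    (hde : ∀ t, e t * (e' t + κ * d t) = 0) (hd0 : d 0 = 0) (he0 : e 0 = 0) (t : ℝ) :
    d t = 0 ∧ e t = 0 := by
  have hE : ∀ t, HasDerivAt (fun s => e s ^ 2 + κ * d s ^ 2) 0 t := fun t =>
    (((he t).pow 2).add (((hd t).pow 2).const_mul κ)).congr_deriv (by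
      linear_combination 2 * hde t)
  have he_zero : ∀ t, e t = 0 := fun t => by
    have hEt := eq_of_forall_hasDerivAt_zero hE t 0
    simp only [hd0, he0] at hEt
    nlinarith [sq_nonneg (e t), mul_nonneg hκ (sq_nonneg (d t))]
  refine ⟨?_, he_zero t⟩
  rw [eq_of_forall_hasDerivAt_zero (f := d) (fun s => he_zero s ▸ hd s) t 0, hd0]

lemma eq_of_hasDerivAt_harmonic {κ : ℝ} (hκ : 0 ≤ κ) {A B C D : ℝ → M2}
    (hA : ∀ t, HasDerivAt A (B t) t) (hB : ∀ t, HasDerivAt B (-κ • A t) t)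
    (hC : ∀ t, HasDerivAt C (D t) t) (hD : ∀ t, HasDerivAt D (-κ • C t) t)
    (h0 : A 0 = C 0) (h0' : B 0 = D 0) (t : ℝ) : A t = C t := by
  ext i j
  have hdiff := oscillator_eq_zero hκ (d := fun s => A s i j - C s i j)
    (e' := fun s => -(κ * (A s i j - C s i j)))
    (fun s => ((hA s).matrix_apply i j).sub ((hC s).matrix_apply i j))
    (fun s => ((hB s).matrix_apply i j).sub ((hD s).matrix_apply i j) |>.congr_deriv (by
      simp only [Matrix.smul_apply, smul_eq_mul]; ring))
    (fun s => by ring) (by rw [h0, sub_self]) (by rw [h0', sub_self]) t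
  exact sub_eq_zero.mp hdiff.1

section Harmonic

variable {E : Type*} [NormedAddCommGroup E] [NormedSpace ℝ E] {k : ℝ} (a b : E) (t : ℝ)

lemma hasDerivAt_cos_smul_add_sin_smul (hk : k ≠ 0) :
    HasDerivAt (fun s => Real.cos (k * s) • a + (k⁻¹ * Real.sin (k * s)) • b)
      ((-(k * Real.sin (k * t))) • a + Real.cos (k * t) • b) t := by
  have hc := ((Real.hasDerivAt_cos (k * t)).comp t ((hasDerivAt_id t).const_mul k)).smul_const a
  have hs := (((Real.hasDerivAt_sin (k * t)).comp t
    ((hasDerivAt_id t).const_mul k)).const_mul k⁻¹).smul_const b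
  refine (hc.add hs).congr_deriv ?_
  match_scalars <;> field_simp

lemma hasDerivAt_neg_sin_smul_add_cos_smul (hk : k ≠ 0) :
    HasDerivAt (fun s => (-(k * Real.sin (k * s))) • a + Real.cos (k * s) • b)
      (-(k ^ 2) • (Real.cos (k * t) • a + (k⁻¹ * Real.sin (k * t)) • b)) t := by
  have hs := (((Real.hasDerivAt_sin (k * t)).comp t
    ((hasDerivAt_id t).const_mul k)).const_mul k).neg.smul_const a
  have hc := ((Real.hasDerivAt_cos (k * t)).comp t ((hasDerivAt_id t).const_mul k)).smul_const b
  refine (hs.add hc).congr_deriv ?_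
  match_scalars <;> field_simp

end Harmonic

def accel (κ : ℝ) (A B : M2) : M2 := Lam κ A B • cofm A - κ • A

lemma mip_accel_cofm_add (κ : ℝ) {A : M2} (B : M2) (hA : mip A A ≠ 0) :
    mip (accel κ A B) (cofm A) + mip B (cofm B) = -(2 * κ) * (A.det - 1) := by
  rw [accel, mip_sub_left, mip_smul_left, mip_smul_left, mip_cofm_cofm, Lam_mul_mip_self B hA,
    mip_cofm_self, mip_cofm_self]
  ring

lemma mip_cofm_mul_mip_accel_cofm_add (κ : ℝ) (A B : M2) :
    mip B (cofm A) * (mip (accel κ A B) (cofm A) + mip B (cofm B) + 2 * κ * (A.det - 1)) = 0 := by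
  by_cases hA : mip A A = 0
  · simp [eq_zero_of_mip_self_eq_zero hA, mip_eq, cofm]
  · rw [mip_accel_cofm_add κ B hA]
    ring

lemma neg_mip_accel_cofm_mul_add (κ : ℝ) (A B : M2) :
    -mip (accel κ A B) (cofm B) * mip A A + (κ - B.det) * (mip B A + mip A B)
      = κ * mip B (cofm A) * mip A A := by
  by_cases hA : mip A A = 0
  · simp [eq_zero_of_mip_self_eq_zero hA, mip_eq]
  · have hLam := Lam_mul_mip_self (κ := κ) B hA
    rw [accel, mip_sub_left, mip_smul_left, mip_smul_left, mip_cofm_cofm, mip_cofm_comm A B,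
      mip_comm B A]
    linear_combination -mip A B * hLam

section Motion

variable {κ : ℝ} {A B : ℝ → M2}

lemma mip_cofm_eq_zero_of_hasDerivAt (hκ : 0 ≤ κ) (hA : ∀ t, HasDerivAt A (B t) t)
    (hB : ∀ t, HasDerivAt B (accel κ (A t) (B t)) t) (hdet : (A 0).det = 1)
    (htan : mip (B 0) (cofm (A 0)) = 0) (t : ℝ) : mip (B t) (cofm (A t)) = 0 :=
  (oscillator_eq_zero (by positivity : 0 ≤ 2 * κ) (d := fun s => (A s).det - 1)
    (fun s => (hA s).det.sub_const 1) (fun s => (hB s).mip (hA s).cofm)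
    (fun s => by simpa only [mul_assoc] using mip_cofm_mul_mip_accel_cofm_add κ (A s) (B s))
    (by rw [hdet, sub_self]) htan t).2

lemma Lam_eq_zero_of_hasDerivAt (hA : ∀ t, HasDerivAt A (B t) t)
    (hB : ∀ t, HasDerivAt B (accel κ (A t) (B t)) t) (htan : ∀ t, mip (B t) (cofm (A t)) = 0)
    (h0 : (κ - (B 0).det) * mip (A 0) (A 0) = 0) (t : ℝ) : Lam κ (A t) (B t) = 0 := by
  have hw : ∀ s, HasDerivAt (fun s => (κ - (B s).det) * mip (A s) (A s)) 0 s := fun s =>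
    (((hB s).det.const_sub κ).mul ((hA s).mip (hA s))).congr_deriv (by
      rw [neg_mip_accel_cofm_mul_add, htan, mul_zero, zero_mul])
  exact Lam_eq_zero (eq_of_forall_hasDerivAt_zero hw t 0 ▸ h0)

end Motion

attribute [local instance] Matrix.normedAddCommGroup Matrix.normedSpace

/-- explicit solutions with vanishing pressure. -/
theorem vanishing_pressure (κ : ℝ) (hκ : 0 ≤ κ) (A₀ B₀ : M2)
    (hdet : A₀.det = 1) (htan : mip B₀ (cofm A₀) = 0)
    (hX : 2 * X1 κ A₀ B₀ + X2 A₀ B₀ ^ 2 - X3 A₀ B₀ ^ 2 = 0)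
    (A : ℝ → M2) (hA : ContDiff ℝ 2 A)
    (hA0 : A 0 = A₀) (hB0 : deriv A 0 = B₀)
    (hode : ∀ t : ℝ, deriv (deriv A) t + κ • A t
      = Lam κ (A t) (deriv A t) • cofm (A t)) :
    (κ = 0 → ∀ t : ℝ, A t = t • B₀ + A₀) ∧
    (0 < κ → ∀ t : ℝ, A t = Real.cos (Real.sqrt κ * t) • A₀
        + ((Real.sqrt κ)⁻¹ * Real.sin (Real.sqrt κ * t)) • B₀) := by
  subst hA0 hB0
  have hA' : ∀ t, HasDerivAt A (deriv A t) t := fun t =>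
    (hA.differentiable two_ne_zero t).hasDerivAt
  have hB' : ∀ t, HasDerivAt (deriv A) (accel κ (A t) (deriv A t)) t := fun t => by
    rw [accel, ← hode t, add_sub_cancel_right]
    exact (hA.differentiable_deriv_two t).hasDerivAt
  have hLam : ∀ t, Lam κ (A t) (deriv A t) = 0 :=
    Lam_eq_zero_of_hasDerivAt hA' hB' (mip_cofm_eq_zero_of_hasDerivAt hκ hA' hB' hdet htan)
      ((invariant_eq_mul_mip_self κ hdet htan).symm.trans hX)
  have hB'' : ∀ t, HasDerivAt (deriv A) (-κ • A t) t := fun t =>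
    (hB' t).congr_deriv (by rw [accel, hLam t, zero_smul, zero_sub, neg_smul])
  refine ⟨fun hκ0 t => ?_, fun hκpos t => ?_⟩
  · subst hκ0
    refine eq_of_hasDerivAt_harmonic le_rfl hA' hB'' (D := fun _ => deriv A 0)
      (fun s => ((hasDerivAt_id s).smul_const _).add_const _ |>.congr_deriv (one_smul _ _))
      (fun s => (hasDerivAt_const s (deriv A 0)).congr_deriv (by simp)) (by simp) rfl t
  · have hk : Real.sqrt κ ≠ 0 := (Real.sqrt_pos.mpr hκpos).ne'
    refine eq_of_hasDerivAt_harmonic hκ hA' hB'' (hasDerivAt_cos_smul_add_sin_smul _ _ · hk)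
      (fun s => ?_) (by simp) (by simp) t
    exact (hasDerivAt_neg_sin_smul_add_cos_smul _ _ s hk).congr_deriv (by rw [Real.sq_sqrt hκ])
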